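/- arXiv:2109.10548 — 2 statements merged into one kernel-verified Lean document; each statement's English description precedes it below -/
import Mathlib

section
/- Let N be an odd square-free positive integer, and let m₁, m₂ be divisors of N with 1 < m₁, m₂ < N. Suppose there exist integers l₁ with 0 ≤ l₁ ≤ N/m₁ - 1 and l₂ with 0 ≤ l₂ ≤ N/m₂ - 1 such that m₁·m₂·(l₂ - l₁) - m₁ + m₂ ≡ 0 (mod N). Then m₁ = m₂ and l₁ = l₂. -/
/-- Distinct matrices `β^m_l` give distinct cosets: if `N` is odd square-free,
`m₁, m₂` divisors of `N` with `1 < mᵢ < N`, and `m₁·m₂·(l₂-l₁) - m₁ + m₂ ≡ 0 (mod N)`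
with `0 ≤ lᵢ ≤ N/mᵢ - 1`, then `m₁ = m₂` and `l₁ = l₂`. -/
theorem stmt0 (N : ℕ) (hN : Odd N) (hsf : Squarefree N) (hNpos : 0 < N)
    (m₁ m₂ : ℕ) (hm₁ : m₁ ∣ N) (hm₂ : m₂ ∣ N)
    (hm₁1 : 1 < m₁) (hm₁N : m₁ < N) (hm₂1 : 1 < m₂) (hm₂N : m₂ < N)
    (l₁ l₂ : ℤ) (hl₁ : 0 ≤ l₁ ∧ l₁ ≤ (N / m₁ : ℕ) - 1)
    (hl₂ : 0 ≤ l₂ ∧ l₂ ≤ (N / m₂ : ℕ) - 1)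
    (hcong : (N : ℤ) ∣ (m₁ : ℤ) * m₂ * (l₂ - l₁) - m₁ + m₂) :
    m₁ = m₂ ∧ l₁ = l₂ := by
  have hd1 : (m₁ : ℤ) ∣ (N : ℤ) := Int.natCast_dvd_natCast.mpr hm₁
  have hd2 : (m₂ : ℤ) ∣ (N : ℤ) := Int.natCast_dvd_natCast.mpr hm₂
  have h12 : (m₁ : ℤ) ∣ (m₂ : ℤ) := by
    have h := hd1.trans hcong
    have h2 : (m₁ : ℤ) ∣ ((m₁ : ℤ) * m₂ * (l₂ - l₁) - m₁ + m₂) -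
        (m₁ * (m₂ * (l₂ - l₁))) + m₁ := (h.sub (Dvd.intro _ rfl)).add dvd_rfl
    have he : ((m₁ : ℤ) * m₂ * (l₂ - l₁) - m₁ + m₂) - (m₁ * (m₂ * (l₂ - l₁))) + m₁
        = (m₂ : ℤ) := by ring
    rwa [he] at h2
  have h21 : (m₂ : ℤ) ∣ (m₁ : ℤ) := by
    have h := hd2.trans hcong
    have h2 : (m₂ : ℤ) ∣ ((m₁ : ℤ) * m₂ * (l₂ - l₁) - m₁ + m₂) -
        (m₂ * (m₁ * (l₂ - l₁))) - m₂ := (h.sub (Dvd.intro _ rfl)).sub dvd_rfl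
    have he : ((m₁ : ℤ) * m₂ * (l₂ - l₁) - m₁ + m₂) - (m₂ * (m₁ * (l₂ - l₁))) - m₂
        = -(m₁ : ℤ) := by ring
    rw [he] at h2
    exact dvd_neg.mp h2
  have hmeq : m₁ = m₂ :=
    Nat.dvd_antisymm (Int.natCast_dvd_natCast.mp h12) (Int.natCast_dvd_natCast.mp h21)
  subst hmeq
  refine ⟨rfl, ?_⟩
  have hm₁0 : m₁ ≠ 0 := by omega
  have hgcd : Nat.gcd N m₁ = m₁ := Nat.gcd_eq_right hm₁
  have hcop : Nat.Coprime (N / m₁) m₁ := by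
    have := Nat.coprime_div_gcd_of_squarefree hsf hm₁0
    rwa [hgcd] at this
  have hNk : (N : ℤ) = (m₁ : ℤ) * (N / m₁ : ℕ) := by
    exact_mod_cast (Nat.mul_div_cancel' hm₁).symm
  -- N ∣ m₁² (l₂ - l₁)
  have hdvd : (N : ℤ) ∣ (m₁ : ℤ) * (m₁ * (l₂ - l₁)) := by
    have he : (m₁ : ℤ) * (m₁ * (l₂ - l₁))
        = ((m₁ : ℤ) * m₁ * (l₂ - l₁) - m₁ + m₁) := by ring
    rw [he]; exact hcong
  have hk0 : 0 < N / m₁ := Nat.div_pos (le_of_lt hm₁N) (by omega)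
  have hkdvd : ((N / m₁ : ℕ) : ℤ) ∣ (m₁ : ℤ) * (l₂ - l₁) := by
    rcases hdvd with ⟨c, hc⟩
    rw [hNk] at hc
    refine ⟨c, ?_⟩
    have : (m₁ : ℤ) * (m₁ * (l₂ - l₁)) = (m₁ : ℤ) * ((N / m₁ : ℕ) * c) := by
      rw [hc]; ring
    exact mul_left_cancel₀ (by exact_mod_cast hm₁0) this
  have hcopZ : IsCoprime ((N / m₁ : ℕ) : ℤ) (m₁ : ℤ) :=
    Nat.isCoprime_iff_coprime.mpr hcop
  have hfin : ((N / m₁ : ℕ) : ℤ) ∣ (l₂ - l₁) :=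
    hcopZ.dvd_of_dvd_mul_left hkdvd
  have hzero : l₂ - l₁ = 0 := by
    refine Int.eq_zero_of_abs_lt_dvd hfin ?_
    rw [abs_lt]
    constructor <;> [skip; skip] <;> omega
  omega
end

section
/- Let N be odd square-free and m ∣ N with 1 < m < N. For each prime p dividing N/m, let b_m(p) be the residue mod p with b_m(p)·m ≡ 1 (mod p). Then the map k ↦ s(k) of the previous construction gives a bijection from (ℤ/(N/m)ℤ)* onto the set of x ∈ ℤ/(N/m)ℤ such that for every prime p ∣ N/m, x ≢ b_m(p) (mod p). -/
lemma stmt7_aux (n : ℕ) [NeZero n] (a : ZMod n)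
    (h : ∀ p : ℕ, p.Prime → ∀ hpd : p ∣ n, ZMod.castHom hpd (ZMod p) a ≠ 0) :
    IsUnit a := by
  have ha : a = ((a.val : ℕ) : ZMod n) := (ZMod.natCast_zmod_val a).symm
  rw [ha, ZMod.isUnit_iff_coprime]
  by_contra hc
  obtain ⟨p, hp, hpa, hpn⟩ := Nat.Prime.not_coprime_iff_dvd.mp hc
  apply h p hp hpn
  have : (ZMod.castHom hpn (ZMod p)) a = ((a.val : ℕ) : ZMod p) := by
    rw [ZMod.castHom_apply, ← ZMod.natCast_val]
  rw [this, ZMod.natCast_eq_zero_iff]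
  exact hpa

/-- For `N` odd square-free, `m ∣ N`, `1 < m < N`: the map `k ↦ s(k)` (characterized by
`s(k)·m - 1 ≡ -k⁻¹ (mod N/m)`) is a bijection from `(ℤ/(N/m)ℤ)*` onto the set of
`x ∈ ℤ/(N/m)ℤ` with `x ≢ b_m(p) (mod p)` for every prime `p ∣ N/m`, where
`b_m(p)` is the inverse of `m` mod `p`. -/
theorem stmt7 (N : ℕ) (hNpos : 0 < N) (hN : Odd N) (hsf : Squarefree N)
    (m : ℕ) (hm : m ∣ N) (hm1 : 1 < m) (hmN : m < N) :
    ∃ f : (ZMod (N / m))ˣ → ZMod (N / m),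
      (∀ k : (ZMod (N / m))ˣ,
        f k * (m : ZMod (N / m)) - 1 = -((k⁻¹ : (ZMod (N / m))ˣ) : ZMod (N / m))) ∧
      Function.Injective f ∧
      Set.range f = {x : ZMod (N / m) | ∀ (p : ℕ) (hp : p.Prime) (hpd : p ∣ N / m),
        ∀ b : ZMod p, b * (m : ZMod p) = 1 → ZMod.castHom hpd (ZMod p) x ≠ b} := by
  set n := N / m with hn
  have hNmn : N = m * n := (Nat.mul_div_cancel' hm).symm
  have hn1 : 1 < n := by
    rcases Nat.lt_or_ge 1 n with h | h
    · exact h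
    · interval_cases n <;> omega
  haveI : NeZero n := ⟨by omega⟩
  have hcop : Nat.Coprime m n := (Nat.squarefree_mul_iff.mp (hNmn ▸ hsf)).1
  have hum : IsUnit ((m : ℕ) : ZMod n) := (ZMod.isUnit_iff_coprime m n).mpr hcop
  obtain ⟨u, hu⟩ := hum
  refine ⟨fun k => (1 - ((k⁻¹ : (ZMod n)ˣ) : ZMod n)) * ((u⁻¹ : (ZMod n)ˣ) : ZMod n), ?_, ?_, ?_⟩
  · intro k
    rw [← hu]
    have : ((u⁻¹ : (ZMod n)ˣ) : ZMod n) * u = 1 := u.inv_mul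
    calc (1 - ((k⁻¹ : (ZMod n)ˣ) : ZMod n)) * ((u⁻¹ : (ZMod n)ˣ) : ZMod n) * u - 1
        = (1 - ((k⁻¹ : (ZMod n)ˣ) : ZMod n)) * (((u⁻¹ : (ZMod n)ˣ) : ZMod n) * u) - 1 := by ring
      _ = -((k⁻¹ : (ZMod n)ˣ) : ZMod n) := by rw [this]; ring
  · intro k₁ k₂ hk
    have := congrArg (fun y => y * (u : ZMod n)) hk
    simp only [mul_assoc, Units.inv_mul, mul_one] at this
    have h2 : ((k₁⁻¹ : (ZMod n)ˣ) : ZMod n) = ((k₂⁻¹ : (ZMod n)ˣ) : ZMod n) := by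
      linear_combination -this
    exact inv_injective (Units.ext h2)
  · ext x
    simp only [Set.mem_range, Set.mem_setOf_eq]
    constructor
    · rintro ⟨k, rfl⟩ p hp hpd b hb hcast
      haveI := Fact.mk hp
      have hfk : (1 - ((k⁻¹ : (ZMod n)ˣ) : ZMod n)) * ((u⁻¹ : (ZMod n)ˣ) : ZMod n) * (m : ZMod n)
          = 1 - ((k⁻¹ : (ZMod n)ˣ) : ZMod n) := by
        rw [← hu, mul_assoc, Units.inv_mul, mul_one]
      have h1 : ZMod.castHom hpd (ZMod p)
          ((1 - ((k⁻¹ : (ZMod n)ˣ) : ZMod n)) * ((u⁻¹ : (ZMod n)ˣ) : ZMod n) * (m : ZMod n))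
          = b * (m : ZMod p) := by
        rw [map_mul, map_natCast, hcast]
      rw [hfk, map_sub, map_one, hb] at h1
      have h0 : ZMod.castHom hpd (ZMod p) ((k⁻¹ : (ZMod n)ˣ) : ZMod n) = 0 := by
        linear_combination -h1
      have : IsUnit (ZMod.castHom hpd (ZMod p) ((k⁻¹ : (ZMod n)ˣ) : ZMod n)) :=
        (ZMod.castHom hpd (ZMod p)).isUnit_map (k⁻¹).isUnit
      rw [h0] at this
      exact not_isUnit_zero this
    · intro h
      have hu1 : IsUnit (1 - x * (m : ZMod n)) := by
        apply stmt7_aux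
        intro p hp hpd hz
        haveI := Fact.mk hp
        rw [map_sub, map_one, map_mul, map_natCast, sub_eq_zero] at hz
        exact h p hp hpd (ZMod.castHom hpd (ZMod p) x) hz.symm rfl
      obtain ⟨w, hw⟩ := hu1
      refine ⟨w⁻¹, ?_⟩
      rw [inv_inv, hw]
      have : (1 : ZMod n) - (1 - x * (m : ZMod n)) = x * (m : ZMod n) := by ring
      rw [this, ← hu, mul_assoc, Units.mul_inv, mul_one]
end
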